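/- arXiv:1605.01814 — 5 statements merged into one kernel-verified Lean document; each statement's English description precedes it below -/
import Mathlib

section
/- For 1/2 < p < 1, q = 1-p, and α in the open interval (1/log(1/q), 1/log(1/p)), the quantity ρ(α) = -(1/log(p/q)) · log((α·log(1/q) - 1)/(1 - α·log(1/p))) is the unique real solution s of the saddle point equation α · T'(s)/T(s) = 1, where T(s) = p^{-s} + q^{-s}. -/
/-!
Clearing denominators, the saddle point equation `α T'(s) = T(s)` reads
`(p/q)^s (α log(1/q) - 1) = 1 - α log(1/p)`. The bounds on `α` make both brackets positive,
and `s ↦ (p/q)^s` is a bijection onto `(0, ∞)` because `p/q > 1`, so the equation has the single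
solution `s = log_{p/q}` of the ratio of the brackets, which is `ρ(α)`.
-/

open Real

theorem hasDerivAt_const_rpow_neg {a : ℝ} (ha : 0 < a) (s : ℝ) :
    HasDerivAt (fun s : ℝ => a ^ (-s)) (a ^ (-s) * log (1 / a)) s := by
  convert (hasDerivAt_neg s).const_rpow ha using 1
  rw [one_div, log_inv]
  ring

theorem saddle_eq_iff_div_rpow_mul {p q : ℝ} (hp : 0 < p) (hq : 0 < q) (α a b s : ℝ) :
    α * (p ^ (-s) * a + q ^ (-s) * b) = p ^ (-s) + q ^ (-s) ↔
      (p / q) ^ s * (α * b - 1) = 1 - α * a := by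
  have hps := rpow_pos_of_pos hp s
  have hqs := rpow_pos_of_pos hq s
  rw [div_rpow hp.le hq.le, rpow_neg hp.le, rpow_neg hq.le]
  field_simp
  constructor <;> intro h <;> linear_combination h

/-- For `1/2 < p < 1`, `q = 1-p`, and `α ∈ (1/log(1/q), 1/log(1/p))`, the quantity
`ρ(α) = -(1/log(p/q)) * log((α log(1/q) - 1)/(1 - α log(1/p)))` is the unique real
solution `s` of the saddle point equation `α * T'(s)/T(s) = 1`, where
`T(s) = p^(-s) + q^(-s)` and `T'` is its derivative. -/
theorem renyi_saddle_point_unique (p : ℝ) (hp : 1/2 < p) (hp1 : p < 1)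
    (q : ℝ) (hq : q = 1 - p)
    (α : ℝ) (hα : 1 / Real.log (1/q) < α) (hα' : α < 1 / Real.log (1/p))
    (T T' : ℝ → ℝ)
    (hT : ∀ s, T s = p ^ (-s) + q ^ (-s))
    (hT' : ∀ s, T' s = p ^ (-s) * Real.log (1/p) + q ^ (-s) * Real.log (1/q))
    (ρα : ℝ)
    (hρ : ρα = -(1 / Real.log (p/q)) *
      Real.log ((α * Real.log (1/q) - 1) / (1 - α * Real.log (1/p)))) :
    (∀ s, HasDerivAt T (T' s) s) ∧
    α * T' ρα / T ρα = 1 ∧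
    (∀ s : ℝ, α * T' s / T s = 1 → s = ρα) := by
  have hp0 : 0 < p := by linarith
  have hq0 : 0 < q := by linarith
  have hbase : 1 < p / q := (one_lt_div hq0).2 (by linarith)
  have hN : 0 < α * log (1 / q) - 1 := by
    have := (div_lt_iff₀ (log_pos ((one_lt_div hq0).2 (by linarith)))).1 hα
    linarith
  have hD : 0 < 1 - α * log (1 / p) := by
    have := (lt_div_iff₀ (log_pos ((one_lt_div hp0).2 hp1))).1 hα'
    linarith
  have hρ_logb : ρα = logb (p / q) ((1 - α * log (1 / p)) / (α * log (1 / q) - 1)) := by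
    rw [hρ, logb, ← inv_div (α * log (1 / q) - 1), log_inv]
    ring
  have key : ∀ s, α * T' s / T s = 1 ↔ s = ρα := fun s => by
    have hT_pos : 0 < T s := by rw [hT]; positivity
    rw [div_eq_one_iff_eq hT_pos.ne', hT, hT', saddle_eq_iff_div_rpow_mul hp0 hq0,
      ← eq_div_iff hN.ne', hρ_logb, eq_comm (a := s), logb_eq_iff_rpow_eq (by linarith) hbase.ne' (by positivity)]
  refine ⟨fun s => ?_, (key ρα).2 rfl, fun s => (key s).1⟩
  rw [show T = _ from funext hT, hT']
  exact (hasDerivAt_const_rpow_neg hp0 s).add (hasDerivAt_const_rpow_neg hq0 s)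
end

section
/- For 1/2 ≤ p < 1, q = 1-p, and α ∈ (1/log(1/q), 1/log(1/p)), the exponent β(α) = α·log T(ρ(α)) - ρ(α) satisfies β(α) ≤ 1, with equality if and only if α = 1/h(p) where h(p) = -p log p - q log q, and moreover ρ(1/h(p)) = -1. -/
open Real Set

/-- For `1/2 ≤ p < 1`, `q = 1-p`, `α ∈ (1/log(1/q), 1/log(1/p))`, the exponent
`β(α) = α log T(ρ(α)) - ρ(α)` satisfies `β(α) ≤ 1`, with equality iff `α = 1/h(p)`
where `h(p) = -p log p - q log q` is the entropy; moreover `ρ(1/h(p)) = -1`. -/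
theorem renyi_beta_le_one (p : ℝ) (hp : 1/2 ≤ p) (hp1 : p < 1)
    (q : ℝ) (hq : q = 1 - p)
    (T : ℝ → ℝ) (hT : ∀ s, T s = p ^ (-s) + q ^ (-s))
    (ρ : ℝ → ℝ)
    (hρ : ∀ α, ρ α = -(1 / Real.log (p/q)) *
      Real.log ((α * Real.log (1/q) - 1) / (1 - α * Real.log (1/p))))
    (β : ℝ → ℝ) (hβ : ∀ α, β α = α * Real.log (T (ρ α)) - ρ α)
    (h : ℝ) (hh : h = -(p * Real.log p) - q * Real.log q)
    (α : ℝ) (hα : 1 / Real.log (1/q) < α) (hα' : α < 1 / Real.log (1/p)) :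
    β α ≤ 1 ∧ (β α = 1 ↔ α = 1 / h) ∧ ρ (1 / h) = -1 := by
  rcases eq_or_lt_of_le hp with hph | hph
  · exfalso
    have hqp : q = p := by rw [hq, ← hph]; norm_num
    rw [hqp] at hα
    linarith
  have hp0 : (0:ℝ) < p := by linarith
  have hq0 : (0:ℝ) < q := by rw [hq]; linarith
  have hqp : q < p := by rw [hq]; linarith
  set a := -Real.log p with ha
  set b := -Real.log q with hb
  have ha0 : 0 < a := by rw [ha]; linarith [Real.log_neg hp0 hp1]
  have hab : a < b := by rw [ha, hb]; linarith [Real.log_lt_log hq0 hqp]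
  have hb0 : 0 < b := lt_trans ha0 hab
  have hba0 : (0:ℝ) < b - a := by linarith
  have hlp : Real.log (1/p) = a := by rw [one_div, Real.log_inv]
  have hlq : Real.log (1/q) = b := by rw [one_div, Real.log_inv]
  have hlpq : Real.log (p/q) = b - a := by
    rw [Real.log_div hp0.ne' hq0.ne', ha, hb]; ring
  rw [hlq] at hα
  rw [hlp] at hα'
  have hα0 : 0 < α := lt_trans (by positivity) hα
  have hαb : 1 < α * b := (div_lt_iff₀ hb0).mp hα
  have hαa : α * a < 1 := (lt_div_iff₀ ha0).mp hα'
  -- entropy facts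
  have hh' : h = p * a + q * b := by rw [hh, ha, hb]; ring
  have hh0 : 0 < h := by rw [hh']; positivity
  -- the argument of the log in ρ
  have hc0 : 0 < (α * b - 1) / (1 - α * a) := div_pos (by linarith) (by linarith)
  have hr : ρ α = -(1/(b-a)) * Real.log ((α * b - 1) / (1 - α * a)) := by
    rw [hρ, hlq, hlp, hlpq]
  have hexp : Real.exp ((a - b) * ρ α) = (α * b - 1) / (1 - α * a) := by
    rw [hr]
    have e : (a - b) * (-(1/(b-a)) * Real.log ((α * b - 1) / (1 - α * a)))
        = Real.log ((α * b - 1) / (1 - α * a)) := by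
      field_simp
      ring
    rw [e, Real.exp_log hc0]
  set Ea := Real.exp (a * ρ α) with hEa
  set Eb := Real.exp (b * ρ α) with hEb
  have hEa0 : 0 < Ea := Real.exp_pos _
  have hEb0 : 0 < Eb := Real.exp_pos _
  have hEab : Real.exp ((a - b) * ρ α) = Ea / Eb := by
    rw [hEa, hEb, ← Real.exp_sub]; ring_nf
  have hdiv : (α * b - 1) / (1 - α * a) = Ea / Eb := hexp.symm.trans hEab
  have hcross : (α * b - 1) * Eb = Ea * (1 - α * a) :=
    (div_eq_div_iff (by linarith : (0:ℝ) < 1 - α * a).ne' hEb0.ne').mp hdiv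
  have hkey : α * (a * Ea + b * Eb) = Ea + Eb := by linear_combination hcross
  have hTr : T (ρ α) = Ea + Eb := by
    have e1 : Real.log p * (-ρ α) = a * ρ α := by rw [ha]; ring
    have e2 : Real.log q * (-ρ α) = b * ρ α := by rw [hb]; ring
    rw [hT, Real.rpow_def_of_pos hp0, Real.rpow_def_of_pos hq0, e1, e2, hEa, hEb]
  set S := Ea + Eb with hS
  have hS0 : 0 < S := by rw [hS]; positivity
  set u := Ea / S with hu
  set v := Eb / S with hv
  have hu0 : 0 < u := div_pos hEa0 hS0
  have hv0 : 0 < v := div_pos hEb0 hS0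
  have huv : u + v = 1 := by rw [hu, hv, hS]; field_simp
  have hlogu : Real.log u = a * ρ α - Real.log S := by
    rw [hu, Real.log_div hEa0.ne' hS0.ne', hEa, Real.log_exp]
  have hlogv : Real.log v = b * ρ α - Real.log S := by
    rw [hv, Real.log_div hEb0.ne' hS0.ne', hEb, Real.log_exp]
  have hα1 : α * (a * u + b * v) = 1 := by
    rw [hu, hv]
    field_simp
    linear_combination hkey
  have hlogS : Real.log S = ρ α * (a * u + b * v)
      - (u * Real.log u + v * Real.log v) := by
    have e1 : Real.log S = a * ρ α - Real.log u := by linarith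
    have e2 : Real.log S = b * ρ α - Real.log v := by linarith
    linear_combination u * e1 + v * e2 - Real.log S * huv
  have hlpa : Real.log p = -a := by rw [ha]; ring
  have hlqb : Real.log q = -b := by rw [hb]; ring
  have hD : β α = 1 + α * (u * (Real.log p - Real.log u)
      + v * (Real.log q - Real.log v)) := by
    rw [hβ, hTr, hlogS, hlpa, hlqb]
    linear_combination (ρ α + 1) * hα1
  have hpq1 : p + q = 1 := by rw [hq]; ring
  have hKL : u * (Real.log p - Real.log u) + v * (Real.log q - Real.log v) ≤ 0 := by
    have k1 : Real.log (p/u) ≤ p/u - 1 := Real.log_le_sub_one_of_pos (div_pos hp0 hu0)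
    have k2 : Real.log (q/v) ≤ q/v - 1 := Real.log_le_sub_one_of_pos (div_pos hq0 hv0)
    rw [Real.log_div hp0.ne' hu0.ne'] at k1
    rw [Real.log_div hq0.ne' hv0.ne'] at k2
    have m1 : u * (Real.log p - Real.log u) ≤ p - u := by
      have t := mul_le_mul_of_nonneg_left k1 hu0.le
      have e : u * (p/u - 1) = p - u := by field_simp
      linarith
    have m2 : v * (Real.log q - Real.log v) ≤ q - v := by
      have t := mul_le_mul_of_nonneg_left k2 hv0.le
      have e : v * (q/v - 1) = q - v := by field_simp
      linarith
    linarith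
  have hKLstrict : u ≠ p →
      u * (Real.log p - Real.log u) + v * (Real.log q - Real.log v) < 0 := by
    intro hne
    have hpu1 : p/u ≠ 1 := by
      intro hcontra
      apply hne
      field_simp at hcontra
      exact hcontra.symm
    have k1 : Real.log (p/u) < p/u - 1 :=
      Real.log_lt_sub_one_of_pos (div_pos hp0 hu0) hpu1
    have k2 : Real.log (q/v) ≤ q/v - 1 := Real.log_le_sub_one_of_pos (div_pos hq0 hv0)
    rw [Real.log_div hp0.ne' hu0.ne'] at k1
    rw [Real.log_div hq0.ne' hv0.ne'] at k2
    have m1 : u * (Real.log p - Real.log u) < p - u := by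
      have t := (mul_lt_mul_iff_right₀ hu0).mpr k1
      have e : u * (p/u - 1) = p - u := by field_simp
      linarith
    have m2 : v * (Real.log q - Real.log v) ≤ q - v := by
      have t := mul_le_mul_of_nonneg_left k2 hv0.le
      have e : v * (q/v - 1) = q - v := by field_simp
      linarith
    linarith
  -- ρ (1/h) = -1
  have hhb' : b - h = p * (b - a) := by rw [hh', hq]; ring
  have hha' : h - a = q * (b - a) := by rw [hh', hq]; ring
  have he1 : 1/h * b - 1 = p * (b - a) / h := by
    rw [← hhb']
    field_simp
  have he2 : 1 - 1/h * a = q * (b - a) / h := by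
    rw [← hha']
    field_simp
  have harg : (1/h * b - 1) / (1 - 1/h * a) = p / q := by
    rw [he1, he2]
    rw [div_div_div_cancel_right₀]
    · rw [mul_comm p, mul_comm q, mul_div_mul_left _ _ hba0.ne']
    · exact hh0.ne'
  have hρh : ρ (1/h) = -1 := by
    rw [hρ, hlq, hlp, hlpq, harg, Real.log_div hp0.ne' hq0.ne', hlpa, hlqb]
    field_simp
    ring
  have hβh : β (1/h) = 1 := by
    rw [hβ, hρh, hT]
    simp only [neg_neg, Real.rpow_one]
    rw [hpq1, Real.log_one]
    ring
  refine ⟨by linarith [mul_nonpos_of_nonneg_of_nonpos hα0.le hKL], ⟨?_, ?_⟩, hρh⟩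
  · intro hβ1
    have hαD : α * (u * (Real.log p - Real.log u)
        + v * (Real.log q - Real.log v)) = 0 := by linarith
    have hD0 : u * (Real.log p - Real.log u) + v * (Real.log q - Real.log v) = 0 :=
      (mul_eq_zero.mp hαD).resolve_left hα0.ne'
    have hup : u = p := by
      by_contra hne
      have := hKLstrict hne
      linarith
    have hvq : v = q := by rw [hq]; linarith
    have hαh : α * h = 1 := by
      rw [hh', ← hup, ← hvq]
      linear_combination hα1
    exact (eq_div_iff hh0.ne').mpr hαh
  · intro hαeq
    rw [hαeq]
    exact hβh
end

section
/- For real ρ → ∞ and integers m ≥ 1, Γ(m+ρ)/Γ(m+1) = exp(m·log(1+ρ/m) + ρ·log ρ + ρ·log(1+m/ρ) - log m + O(ρ)), where the O(ρ) is uniform in m; consequently, for fixed 0 < p < 1 the quantity p^m · m · Γ(m+ρ)/Γ(m+1), maximized over integers m ≥ 1, is exp(ρ log ρ + O(ρ)), with the maximum attained at m = Θ(ρ). -/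
/-!
With `F x = x log x - x` a primitive of `log`, log-convexity of `Γ` and the functional equation
`log Γ (x + 1) = log Γ x + log x` show that `log Γ - F` is antitone and `log Γ - F + log` is
monotone on `(0, ∞)`. Comparing the values at `m` and `m + ρ` gives
`log Γ (m + ρ) - log Γ m = F (m + ρ) - F m + O(log (1 + ρ / m))`, which is the stated expansion
up to `O(ρ)`. In `log (p ^ m m Γ(m + ρ) / Γ(m + 1)) = ρ log ρ + m log p + m log (1 + ρ / m) +
ρ log (1 + m / ρ) + O(ρ)` the last three terms are then `O(ρ)` from above for every `m`, since
`log` lies below its tangent lines, and at least `(ρ + 1) log p` at `m = ⌈ρ⌉`.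
-/

open Real Set

noncomputable def logPrimitive (x : ℝ) : ℝ := x * log x - x

lemma mul_log_le_logPrimitive_sub {a b : ℝ} (ha : 0 < a) (hab : a ≤ b) :
    (b - a) * log a ≤ logPrimitive b - logPrimitive a := by
  have hb : 0 < b := ha.trans_le hab
  have h := mul_le_mul_of_nonneg_left (one_sub_inv_le_log_of_pos (div_pos hb ha)) hb.le
  rw [inv_div, mul_one_sub, mul_div_cancel₀ _ hb.ne', log_div hb.ne' ha.ne'] at h
  unfold logPrimitive
  linear_combination h

lemma logPrimitive_sub_le_mul_log {a b : ℝ} (ha : 0 < a) (hab : a ≤ b) :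
    logPrimitive b - logPrimitive a ≤ (b - a) * log b := by
  have hb : 0 < b := ha.trans_le hab
  have h := mul_le_mul_of_nonneg_left (log_le_sub_one_of_pos (div_pos hb ha)) ha.le
  rw [mul_sub_one, mul_div_cancel₀ _ ha.ne', log_div hb.ne' ha.ne'] at h
  unfold logPrimitive
  linear_combination h

lemma log_Gamma_add_one {x : ℝ} (hx : 0 < x) : log (Gamma (x + 1)) = log (Gamma x) + log x := by
  rw [Gamma_add_one hx.ne', log_mul hx.ne' (Gamma_pos_of_pos hx).ne', add_comm]

lemma log_Gamma_add_le {x t : ℝ} (hx : 0 < x) (ht₀ : 0 ≤ t) (ht₁ : t ≤ 1) :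
    log (Gamma (x + t)) ≤ log (Gamma x) + t * log x := by
  have h := convexOn_log_Gamma.2 (mem_Ioi.2 hx) (mem_Ioi.2 (by linarith : 0 < x + 1))
    (sub_nonneg.2 ht₁) ht₀ (sub_add_cancel 1 t)
  simp only [smul_eq_mul, Function.comp_apply, log_Gamma_add_one hx] at h
  rw [show (1 - t) * x + t * (x + 1) = x + t by ring] at h
  linarith

lemma log_Gamma_add_one_le {x t : ℝ} (hx : 0 < x) (ht₀ : 0 ≤ t) (ht₁ : t ≤ 1) :
    log (Gamma x) + log x ≤ log (Gamma (x + t)) + (1 - t) * log (x + t) := by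
  have hxt : 0 < x + t := by linarith
  have h := convexOn_log_Gamma.2 (mem_Ioi.2 hxt) (mem_Ioi.2 (by linarith : 0 < x + t + 1))
    ht₀ (sub_nonneg.2 ht₁) (add_sub_cancel t 1)
  simp only [smul_eq_mul, Function.comp_apply, log_Gamma_add_one hxt] at h
  rw [show t * (x + t) + (1 - t) * (x + t + 1) = x + 1 by ring, log_Gamma_add_one hx] at h
  linarith

lemma monotoneOn_of_unit_steps {β : Type*} [Preorder β] {f : ℝ → β} {a : ℝ}
    (hf : ∀ x, a < x → ∀ t ∈ Icc (0 : ℝ) 1, f x ≤ f (x + t)) : MonotoneOn f (Ioi a) := by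
  have steps : ∀ n : ℕ, ∀ x, a < x → ∀ t ∈ Icc (0 : ℝ) n, f x ≤ f (x + t) := by
    intro n
    induction n with
    | zero => exact fun x hx t ht => hf x hx t ⟨ht.1, ht.2.trans (by simp)⟩
    | succ n ih =>
      intro x hx t ⟨ht₀, htn⟩
      rcases le_total t 1 with ht₁ | ht₁
      · exact hf x hx t ⟨ht₀, ht₁⟩
      calc f x ≤ f (x + 1) := hf x hx 1 ⟨zero_le_one, le_rfl⟩
        _ ≤ f (x + 1 + (t - 1)) :=
          ih (x + 1) (by linarith) (t - 1) ⟨by linarith, by push_cast at htn; linarith⟩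
        _ = f (x + t) := by ring_nf
  intro x hx y _ hxy
  simpa using steps ⌈y - x⌉₊ x hx (y - x) ⟨sub_nonneg.2 hxy, Nat.le_ceil _⟩

noncomputable def logGammaDefect (x : ℝ) : ℝ := log (Gamma x) - logPrimitive x

lemma antitoneOn_logGammaDefect : AntitoneOn logGammaDefect (Ioi 0) :=
  monotoneOn_of_unit_steps (β := ℝᵒᵈ) fun x hx t ⟨ht₀, ht₁⟩ => by
    have hG := log_Gamma_add_le hx ht₀ ht₁
    have hF := mul_log_le_logPrimitive_sub hx (le_add_of_nonneg_right ht₀)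
    show logGammaDefect (x + t) ≤ logGammaDefect x
    unfold logGammaDefect
    rw [add_sub_cancel_left] at hF
    linarith

lemma monotoneOn_logGammaDefect_add_log :
    MonotoneOn (fun x => logGammaDefect x + log x) (Ioi 0) :=
  monotoneOn_of_unit_steps fun x hx t ⟨ht₀, ht₁⟩ => by
    have hG := log_Gamma_add_one_le hx ht₀ ht₁
    have hF := logPrimitive_sub_le_mul_log hx (le_add_of_nonneg_right ht₀)
    unfold logGammaDefect
    rw [add_sub_cancel_left] at hF
    linarith

lemma logPrimitive_add_sub_logPrimitive {x ρ : ℝ} (hx : 0 < x) (hρ : 0 < ρ) :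
    logPrimitive (x + ρ) - logPrimitive x + ρ =
      x * log (1 + ρ / x) + ρ * log ρ + ρ * log (1 + x / ρ) := by
  rw [one_add_div hx.ne', add_comm 1, div_add_one hρ.ne', log_div (by positivity) hx.ne',
    log_div (by positivity) hρ.ne']
  unfold logPrimitive
  ring

lemma abs_log_Gamma_ratio_sub_le {x ρ : ℝ} (hx : 1 ≤ x) (hρ : 0 < ρ) :
    |log (Gamma (x + ρ) / Gamma (x + 1)) -
      (x * log (1 + ρ / x) + ρ * log ρ + ρ * log (1 + x / ρ) - log x)| ≤ 2 * ρ := by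
  have hx₀ : 0 < x := by linarith
  have hxρ : x ≤ x + ρ := by linarith
  have hD := antitoneOn_logGammaDefect hx₀ (hx₀.trans_le hxρ) hxρ
  have hDlog := monotoneOn_logGammaDefect_add_log hx₀ (hx₀.trans_le hxρ) hxρ
  have hlog : log (x + ρ) - log x ≤ ρ := by
    have h := log_le_sub_one_of_pos (div_pos (hx₀.trans_le hxρ) hx₀)
    rw [log_div (by positivity) hx₀.ne', add_div, div_self hx₀.ne', add_sub_cancel_left] at h
    exact h.trans (div_le_self hρ.le hx)
  rw [log_div (Gamma_pos_of_pos (by positivity)).ne' (Gamma_pos_of_pos (by positivity)).ne',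
    log_Gamma_add_one hx₀, ← logPrimitive_add_sub_logPrimitive hx₀ hρ]
  simp only [logGammaDefect] at hD hDlog
  rw [abs_le]
  constructor <;> linarith

lemma abs_log_pow_mul_Gamma_ratio_sub_le {p ρ : ℝ} (hp : 0 < p) (hρ : 0 < ρ) {m : ℕ}
    (hm : 1 ≤ m) :
    |log (p ^ m * m * (Gamma (m + ρ) / Gamma (m + 1))) -
      (m * log p + m * log (1 + ρ / m) + ρ * log ρ + ρ * log (1 + m / ρ))| ≤ 2 * ρ := by
  have hm₀ : (0 : ℝ) < m := by exact_mod_cast hm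
  rw [log_mul (by positivity) (by positivity), log_mul (by positivity) hm₀.ne', log_pow]
  convert abs_log_Gamma_ratio_sub_le (x := m) (by exact_mod_cast hm) hρ using 2
  ring

lemma pow_mul_Gamma_ratio_le {p ρ : ℝ} (hp : 0 < p) (hp1 : p < 1) (hρ : 0 < ρ) {m : ℕ}
    (hm : 1 ≤ m) :
    p ^ m * m * (Gamma (m + ρ) / Gamma (m + 1)) ≤
      exp (ρ * log ρ + (2 - log p - log (-log p)) * ρ) := by
  have ha : 0 < -log p := neg_pos.2 (log_neg hp hp1)
  have hm₀ : (0 : ℝ) < m := by exact_mod_cast hm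
  have hmain := (abs_le.1 (abs_log_pow_mul_Gamma_ratio_sub_le hp hρ hm)).2
  have hsmall : m * log (1 + ρ / m) ≤ ρ := by
    have h := mul_le_mul_of_nonneg_left (log_le_sub_one_of_pos (by positivity : 0 < 1 + ρ / m))
      hm₀.le
    rwa [add_sub_cancel_left, mul_div_cancel₀ _ hm₀.ne'] at h
  -- `log y ≤ a y - 1 - log a` (tangent at `1 / a`, `a = -log p`): the decay of `p ^ m` absorbs the
  -- growth of `ρ log (1 + m / ρ)` in `m`.
  have hlarge : ρ * log (1 + m / ρ) ≤ -log p * (ρ + m) - ρ - ρ * log (-log p) := by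
    have h := mul_le_mul_of_nonneg_left
      (log_le_sub_one_of_pos (by positivity : 0 < -log p * (1 + m / ρ))) hρ.le
    rw [log_mul ha.ne' (by positivity)] at h
    have e : ρ * (-log p * (1 + m / ρ) - 1) = -log p * (ρ + m) - ρ := by field_simp
    linarith
  rw [← log_le_iff_le_exp (by positivity)]
  linarith

lemma exp_le_pow_mul_Gamma_ratio {p ρ : ℝ} (hp : 0 < p) (hρ : 0 < ρ) {m : ℕ} (hm : 1 ≤ m) :
    exp (ρ * log ρ - 2 * ρ + m * log p) ≤ p ^ m * m * (Gamma (m + ρ) / Gamma (m + 1)) := by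
  have hm₀ : (0 : ℝ) < m := by exact_mod_cast hm
  have hmain := (abs_le.1 (abs_log_pow_mul_Gamma_ratio_sub_le hp hρ hm)).1
  have h₁ : 0 ≤ m * log (1 + ρ / m) :=
    mul_nonneg hm₀.le (log_nonneg (le_add_of_nonneg_right (by positivity)))
  have h₂ : 0 ≤ ρ * log (1 + m / ρ) :=
    mul_nonneg hρ.le (log_nonneg (le_add_of_nonneg_right (by positivity)))
  rw [← le_log_iff_exp_le (by positivity)]
  linarith

/-- Uniform Gamma-ratio asymptotics: there is `C > 0` such that for all real
`ρ ≥ 2` and integers `m ≥ 1`,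
`|log(Γ(m+ρ)/Γ(m+1)) - (m log(1+ρ/m) + ρ log ρ + ρ log(1+m/ρ) - log m)| ≤ C ρ`;
consequently, for fixed `0 < p < 1`, the maximum over `m ≥ 1` of
`p^m · m · Γ(m+ρ)/Γ(m+1)` equals `exp(ρ log ρ + O(ρ))` and is attained at
`m = Θ(ρ)`. -/
theorem gamma_ratio_asymptotics (p : ℝ) (hp : 0 < p) (hp1 : p < 1) :
    ∃ C > 0, ∀ ρ : ℝ, 2 ≤ ρ →
      (∀ m : ℕ, 1 ≤ m →
        |Real.log (Real.Gamma (m + ρ) / Real.Gamma (m + 1)) -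
          ((m : ℝ) * Real.log (1 + ρ / m) + ρ * Real.log ρ +
            ρ * Real.log (1 + m / ρ) - Real.log m)| ≤ C * ρ) ∧
      (∀ m : ℕ, 1 ≤ m →
        p ^ (m : ℕ) * (m : ℝ) * (Real.Gamma (m + ρ) / Real.Gamma (m + 1)) ≤
          Real.exp (ρ * Real.log ρ + C * ρ)) ∧
      (∃ m : ℕ, 1 ≤ m ∧ ρ / C ≤ (m : ℝ) ∧ (m : ℝ) ≤ C * ρ ∧
        Real.exp (ρ * Real.log ρ - C * ρ) ≤
          p ^ (m : ℕ) * (m : ℝ) * (Real.Gamma (m + ρ) / Real.Gamma (m + 1))) := by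
  set a := -log p
  have ha : 0 < a := neg_pos.2 (log_neg hp hp1)
  have ha_inv : 0 < a⁻¹ := inv_pos.2 ha
  refine ⟨2 + 2 * a + a⁻¹, by positivity, fun ρ hρ => ⟨fun m hm => ?_, fun m hm => ?_, ?_⟩⟩
  · refine (abs_log_Gamma_ratio_sub_le (by exact_mod_cast hm) (by linarith)).trans ?_
    nlinarith
  · refine (pow_mul_Gamma_ratio_le hp hp1 (by linarith) hm).trans (exp_le_exp.2 ?_)
    nlinarith [one_sub_inv_le_log_of_pos ha]
  · have hm : 1 ≤ ⌈ρ⌉₊ := Nat.ceil_pos.2 (by linarith)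
    have hm_ge : ρ ≤ ⌈ρ⌉₊ := Nat.le_ceil ρ
    have hm_lt : (⌈ρ⌉₊ : ℝ) < ρ + 1 := Nat.ceil_lt_add_one (by linarith)
    refine ⟨⌈ρ⌉₊, hm, (div_le_self (by linarith) (by linarith)).trans hm_ge, by nlinarith, ?_⟩
    refine (exp_le_exp.2 ?_).trans (exp_le_pow_mul_Gamma_ratio hp (by linarith) hm)
    nlinarith
end

section
/- (Monotone subsequence trick) Let (H_n) be a nondecreasing sequence of random variables and c > 0 a constant. Suppose for every ε > 0, Pr[|H_n/log n − c| > ε] = O(exp(−Θ((log log n)²))). Then H_n/log n → c almost surely. -/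
/-!
Along the sparse subsequence `n_k = 2 ^ (k + 2) ^ 2` we have `log log n_k ≥ log (k + 2)`, so the
tail bounds `exp (-a (log log n_k)²)` are eventually at most `(k + 2)⁻²`; they are summable and
Borel–Cantelli gives `H_{n_k} / log n_k → c` almost surely. The subsequence is still dense on the
logarithmic scale, `log n_k / log n_{k+1} → 1`, so for `n_k ≤ n ≤ n_{k+1}` monotonicity squeezes
`H_n / log n` between `H_{n_k} / log n_{k+1}` and `H_{n_{k+1}} / log n_k`, which both tend to `c`.
-/

open MeasureTheory ProbabilityTheory Filter Topology

theorem div_pos_iff_of_nonneg_right {a b : ℝ} (hb : 0 ≤ b) : 0 < a / b ↔ 0 < a ∧ 0 < b :=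
  ⟨fun h => (div_pos_iff.1 h).resolve_right fun h' => h'.2.not_ge hb, fun h => div_pos h.1 h.2⟩

theorem log_natCast_le_log_natCast {m n : ℕ} (h : m ≤ n) : Real.log m ≤ Real.log n := by
  rcases m.eq_zero_or_pos with rfl | hm
  · simpa using Real.log_natCast_nonneg n
  · exact Real.log_le_log (by exact_mod_cast hm) (by exact_mod_cast h)

theorem StrictMono.eventually_exists_ge_le_le_succ {u : ℕ → ℕ} (hu : StrictMono u) (K : ℕ) :
    ∀ᶠ n in atTop, ∃ k ≥ K, u k ≤ n ∧ n ≤ u (k + 1) := by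
  filter_upwards [eventually_gt_atTop (u K)] with n hn
  obtain ⟨k, hkn, hnk⟩ := hu.exists_between_of_tendsto_atTop hu.tendsto_atTop
    ((hu.monotone K.zero_le).trans_lt hn)
  refine ⟨k, ?_, hkn.le, hnk⟩
  by_contra! hk
  exact (hnk.trans (hu.monotone hk)).not_gt hn

theorem tendsto_div_log_of_monotone_of_subseq {f : ℕ → ℝ} {u : ℕ → ℕ} {c : ℝ}
    (hf : Monotone f) (hc : 0 < c) (hu : StrictMono u)
    (hratio : Tendsto (fun k => Real.log (u k) / Real.log (u (k + 1))) atTop (𝓝 1))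
    (hsub : Tendsto (fun k => f (u k) / Real.log (u k)) atTop (𝓝 c)) :
    Tendsto (fun n => f n / Real.log n) atTop (𝓝 c) := by
  have hlog : ∀ᶠ k in atTop, Real.log (u k) ≠ 0 := by
    filter_upwards [eventually_ge_atTop 2] with k hk
    exact (Real.log_pos (by exact_mod_cast hk.trans (hu.id_le k))).ne'
  have hlower : Tendsto (fun k => f (u k) / Real.log (u (k + 1))) atTop (𝓝 c) := by
    simpa using (hsub.mul hratio).congr' (hlog.mono fun k hk => div_mul_div_cancel₀ hk)
  have hupper : Tendsto (fun k => f (u (k + 1)) / Real.log (u k)) atTop (𝓝 c) := by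
    have hinv := (hsub.comp (tendsto_add_atTop_nat 1)).mul (hratio.inv₀ one_ne_zero)
    simp only [inv_one, mul_one, inv_div] at hinv
    exact hinv.congr' (((tendsto_add_atTop_nat 1).eventually hlog).mono
      fun k hk => div_mul_div_cancel₀ hk)
  refine tendsto_order.2 ⟨fun a ha => ?_, fun b hb => ?_⟩
  · -- comparing with `max a 0` also makes `f (u k)` positive, as `div_le_div₀` needs
    obtain ⟨K, hK⟩ := eventually_atTop.1 (hlower.eventually (lt_mem_nhds (max_lt ha hc)))
    filter_upwards [hu.eventually_exists_ge_le_le_succ K, eventually_ge_atTop 2]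
      with n ⟨k, hk, hkn, hnk⟩ hn
    have hfk : 0 < f (u k) := ((div_pos_iff_of_nonneg_right (Real.log_natCast_nonneg _)).1
      ((le_max_right a 0).trans_lt (hK k hk))).1
    calc a ≤ max a 0 := le_max_left a 0
      _ < f (u k) / Real.log (u (k + 1)) := hK k hk
      _ ≤ f n / Real.log n :=
        div_le_div₀ (hfk.le.trans (hf hkn)) (hf hkn) (Real.log_pos (by exact_mod_cast hn))
          (log_natCast_le_log_natCast hnk)
  · obtain ⟨K, hK⟩ := eventually_atTop.1 (hupper.eventually (Ioo_mem_nhds hc hb))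
    filter_upwards [hu.eventually_exists_ge_le_le_succ K] with n ⟨k, hk, hkn, hnk⟩
    obtain ⟨hpos, hltb⟩ := hK k hk
    obtain ⟨hfk, hlogk⟩ := (div_pos_iff_of_nonneg_right (Real.log_natCast_nonneg _)).1 hpos
    calc f n / Real.log n ≤ f (u (k + 1)) / Real.log (u k) :=
          div_le_div₀ hfk.le (hf hnk) hlogk (log_natCast_le_log_natCast hkn)
      _ < b := hltb

theorem ae_tendsto_of_tsum_measure_lt_dist_ne_top {Ω E : Type*} [MeasurableSpace Ω]
    [PseudoMetricSpace E] {μ : Measure Ω} {X : ℕ → Ω → E} {c : E}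
    (h : ∀ ε > 0, ∑' k, μ {ω | ε < dist (X k ω) c} ≠ ⊤) :
    ∀ᵐ ω ∂μ, Tendsto (fun k => X k ω) atTop (𝓝 c) := by
  have hfin : ∀ j : ℕ, ∀ᵐ ω ∂μ, ∀ᶠ k in atTop, dist (X k ω) c ≤ 1 / (j + 1) := fun j => by
    simpa using ae_eventually_notMem (h (1 / (j + 1)) Nat.one_div_pos_of_nat)
  filter_upwards [ae_all_iff.2 hfin] with ω hω
  refine Metric.tendsto_atTop'.2 fun ε hε => ?_
  obtain ⟨j, hj⟩ := exists_nat_one_div_lt hε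
  obtain ⟨N, hN⟩ := eventually_atTop.1 (hω j)
  exact ⟨N, fun k hk => (hN k hk.le).trans_lt hj⟩

theorem summable_exp_neg_mul_log_sq {a : ℝ} (ha : 0 < a) :
    Summable fun k : ℕ => Real.exp (-a * Real.log k ^ 2) := by
  refine .of_norm_bounded_eventually_nat
    (Real.summable_nat_rpow.2 (by norm_num : (-2 : ℝ) < -1)) ?_
  filter_upwards [eventually_gt_atTop 0,
    (Real.tendsto_log_atTop.comp tendsto_natCast_atTop_atTop).eventually_ge_atTop (2 / a)]
    with k hk hlog
  have hlog' : 2 ≤ a * Real.log k := by rwa [div_le_iff₀' ha] at hlog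
  rw [Real.norm_of_nonneg (Real.exp_nonneg _), Real.rpow_def_of_pos (by exact_mod_cast hk)]
  refine Real.exp_le_exp.2 ?_
  nlinarith [(Real.log_nonneg (by exact_mod_cast hk : (1 : ℝ) ≤ k))]

-- The offset `k + 2` makes every term at least `3`, where the tail bound applies.
def twoPowSq (k : ℕ) : ℕ := 2 ^ (k + 2) ^ 2

theorem log_twoPowSq (k : ℕ) : Real.log (twoPowSq k) = ((k + 2 : ℕ) : ℝ) ^ 2 * Real.log 2 := by
  rw [twoPowSq, Nat.cast_pow, Real.log_pow, Nat.cast_pow, Nat.cast_ofNat]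

theorem strictMono_twoPowSq : StrictMono twoPowSq :=
  strictMono_nat_of_lt_succ fun k =>
    Nat.pow_lt_pow_right (by norm_num) (Nat.pow_lt_pow_left (by omega) (by norm_num))

theorem three_le_twoPowSq (k : ℕ) : 3 ≤ twoPowSq k :=
  calc 3 ≤ 2 ^ 2 ^ 2 := by norm_num
    _ ≤ twoPowSq k := Nat.pow_le_pow_right (by norm_num) (Nat.pow_le_pow_left (by omega) 2)

theorem tendsto_log_twoPowSq_div_log_twoPowSq_succ :
    Tendsto (fun k => Real.log (twoPowSq k) / Real.log (twoPowSq (k + 1))) atTop (𝓝 1) := by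
  have h := ((tendsto_natCast_div_add_atTop (1 : ℝ)).comp (tendsto_add_atTop_nat 2)).pow 2
  rw [one_pow] at h
  refine h.congr fun k => ?_
  rw [Function.comp_apply, log_twoPowSq, log_twoPowSq,
    mul_div_mul_right _ _ (Real.log_pos one_lt_two).ne', div_pow]
  push_cast
  ring

theorem log_le_log_log_twoPowSq (k : ℕ) :
    Real.log ((k + 2 : ℕ) : ℝ) ≤ Real.log (Real.log (twoPowSq k)) := by
  have hk : (2 : ℝ) ≤ ((k + 2 : ℕ) : ℝ) := by exact_mod_cast Nat.le_add_left 2 k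
  refine Real.log_le_log (by positivity) ?_
  rw [log_twoPowSq]
  nlinarith [Real.log_two_gt_d9]

theorem monotone_subsequence_trick_general {Ω : Type*} [MeasureSpace Ω]
    (H : ℕ → Ω → ℝ) (c : ℝ) (hc : 0 < c)
    (hmono : ∀ ω, Monotone fun n => H n ω)
    (hbound : ∀ ε : ℝ, 0 < ε → ∃ A a : ℝ, 0 < A ∧ 0 < a ∧ ∀ n : ℕ, 3 ≤ n →
      ℙ {ω | ε < |H n ω / Real.log n - c|} ≤
        ENNReal.ofReal (A * Real.exp (-a * (Real.log (Real.log n)) ^ 2))) :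
    ∀ᵐ ω ∂(ℙ : Measure Ω),
      Tendsto (fun n : ℕ => H n ω / Real.log n) atTop (nhds c) := by
  have hsub : ∀ᵐ ω ∂(ℙ : Measure Ω),
      Tendsto (fun k => H (twoPowSq k) ω / Real.log (twoPowSq k)) atTop (𝓝 c) := by
    refine ae_tendsto_of_tsum_measure_lt_dist_ne_top fun ε hε => ?_
    obtain ⟨A, a, hA, ha, hbound⟩ := hbound ε hε
    have hsum := ((summable_nat_add_iff 2).2 (summable_exp_neg_mul_log_sq ha)).mul_left A
    refine ne_top_of_le_ne_top hsum.tsum_ofReal_ne_top (ENNReal.tsum_le_tsum fun k => ?_)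
    simp only [Real.dist_eq]
    refine (hbound _ (three_le_twoPowSq k)).trans <| ENNReal.ofReal_le_ofReal <|
      mul_le_mul_of_nonneg_left (Real.exp_le_exp.2 ?_) hA.le
    rw [neg_mul, neg_mul, neg_le_neg_iff]
    exact mul_le_mul_of_nonneg_left
      (pow_le_pow_left₀ (Real.log_natCast_nonneg _) (log_le_log_log_twoPowSq k) 2) ha.le
  filter_upwards [hsub] with ω hω
  exact tendsto_div_log_of_monotone_of_subseq (hmono ω) hc strictMono_twoPowSq
    tendsto_log_twoPowSq_div_log_twoPowSq_succ hω

/-- Monotone subsequence trick: if `(H_n)` is pointwise nondecreasing and for every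
`ε > 0` there are `A, a > 0` with
`Pr[|H_n/log n - c| > ε] ≤ A exp(-a (log log n)²)` for all `n ≥ 3`, then
`H_n / log n → c` almost surely. -/
theorem monotone_subsequence_trick {Ω : Type*} [MeasureSpace Ω]
    [IsProbabilityMeasure (ℙ : Measure Ω)]
    (H : ℕ → Ω → ℝ) (c : ℝ) (hc : 0 < c)
    (hmono : ∀ ω, Monotone fun n => H n ω)
    (hbound : ∀ ε : ℝ, 0 < ε → ∃ A a : ℝ, 0 < A ∧ 0 < a ∧ ∀ n : ℕ, 3 ≤ n →
      ℙ {ω | ε < |H n ω / Real.log n - c|} ≤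
        ENNReal.ofReal (A * Real.exp (-a * (Real.log (Real.log n)) ^ 2))) :
    ∀ᵐ ω ∂(ℙ : Measure Ω),
      Tendsto (fun n : ℕ => H n ω / Real.log n) atTop (nhds c) :=
  monotone_subsequence_trick_general H c hc hmono hbound
end

section
/- The Poisson transform G̃_k(z) = Σ_{m≥0} μ_{m,k} z^m e^{−z}/m! of the average PATRICIA profile satisfies the functional equation G̃_k(z) = G̃_{k−1}(pz) + G̃_{k−1}(qz) + e^{−pz}(G̃_k − G̃_{k−1})(qz) + e^{−qz}(G̃_k − G̃_{k−1})(pz) for all k ≥ 1 and all z (as formal identity of entire functions / for all real z ≥ 0). -/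
noncomputable def patriciaMu (p : ℝ) : ℕ → ℕ → ℝ
  | 0, _ => 0
  | 1, 0 => 1
  | 1, _ + 1 => 0
  | _ + 2, 0 => 0
  | n + 2, k + 1 =>
      (∑ j ∈ Finset.Ioo 0 (n + 2),
        ((n + 2).choose j : ℝ) * p ^ j * (1 - p) ^ (n + 2 - j) *
          (patriciaMu p j k + patriciaMu p (n + 2 - j) k)) /
        (1 - p ^ (n + 2) - (1 - p) ^ (n + 2))
  termination_by n k => k

/-- The Poisson transform `G̃_k(z) = ∑_{m ≥ 0} μ_{m,k} z^m e^{-z} / m!` of the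
average PATRICIA profile. -/
noncomputable def poissonG (p : ℝ) (k : ℕ) (z : ℝ) : ℝ :=
  ∑' m : ℕ, patriciaMu p m k * z ^ m * Real.exp (-z) / (m.factorial : ℝ)

/-!
Write `F_k(z) = ∑ μ_{m,k} z^m / m!`, so that `G̃_k(z) = e^{-z} F_k(z)`. Clearing the denominator
`1 - p^n - q^n` in the recurrence and adding the terms `j = 0` and `j = n` turns it into
`μ_{n,k+1} = ∑_{j=0}^n C(n,j) p^j q^{n-j} (μ_{j,k} + μ_{n-j,k})`
  `+ (p^n + q^n)(μ_{n,k+1} - μ_{n,k})`,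
valid for every `n`. Binomial convolutions with `p^j q^{n-j}` are the coefficients of the
products `e^{qz} F_k(pz)` and `e^{pz} F_k(qz)`, so
`F_{k+1}(z) = e^{qz} F_k(pz) + e^{pz} F_k(qz) + (F_{k+1} - F_k)(qz) + (F_{k+1} - F_k)(pz)`,
and multiplying by `e^{-z} = e^{-pz} e^{-qz}` gives the functional equation. The bound
`0 ≤ μ_{n,k} ≤ n` makes every series involved absolutely convergent.
-/

open Finset
open scoped Nat

section Binomial

variable {R : Type*}

theorem sum_range_succ_eq_add_sum_Ioo_add [AddCommMonoid R] (f : ℕ → R) {n : ℕ} (hn : 0 < n) :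
    ∑ j ∈ range (n + 1), f j = f 0 + ∑ j ∈ Ioo 0 n, f j + f n := by
  rw [sum_range_succ, range_eq_Ico, ← Ioo_insert_left hn, sum_insert (by simp)]

theorem sum_Ioo_choose_mul_pow [CommRing R] (a b : R) {n : ℕ} (hn : 0 < n) :
    ∑ j ∈ Ioo 0 n, (n.choose j : R) * a ^ j * b ^ (n - j) = (a + b) ^ n - a ^ n - b ^ n := by
  have h := add_pow a b n
  rw [sum_range_succ_eq_add_sum_Ioo_add _ hn] at h
  simp only [pow_zero, Nat.sub_zero, Nat.choose_zero_right, Nat.choose_self, Nat.sub_self,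
    Nat.cast_one, one_mul, mul_one] at h
  have hcomm : ∀ j, (n.choose j : R) * a ^ j * b ^ (n - j) = a ^ j * b ^ (n - j) * n.choose j :=
    fun j => by ring
  simp only [hcomm, h]
  abel

theorem sum_range_choose_mul_pow_mul_reflect [CommSemiring R] (a b : R) (f : ℕ → R) (n : ℕ) :
    ∑ j ∈ range (n + 1), (n.choose j : R) * a ^ j * b ^ (n - j) * f (n - j) =
      ∑ j ∈ range (n + 1), (n.choose j : R) * b ^ j * a ^ (n - j) * f j := by
  rw [← sum_range_reflect]
  refine sum_congr rfl fun j hj => ?_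
  have hjn : j ≤ n := Nat.lt_succ_iff.mp (mem_range.mp hj)
  rw [Nat.add_sub_cancel, Nat.choose_symm hjn, Nat.sub_sub_self hjn]
  ring

theorem one_sub_pow_sub_one_sub_pow_pos {p : ℝ} (hp : 0 < p) (hp1 : p < 1) {n : ℕ}
    (hn : 2 ≤ n) : 0 < 1 - p ^ n - (1 - p) ^ n := by
  have hq : 0 < 1 - p := by linarith
  have h := sum_Ioo_choose_mul_pow p (1 - p) (n := n) (by omega)
  rw [add_sub_cancel, one_pow] at h
  rw [← h]
  refine sum_pos (fun j hj => ?_) ⟨1, by simp; omega⟩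
  have hchoose : 0 < (n.choose j : ℝ) := Nat.cast_pos.mpr (Nat.choose_pos (mem_Ioo.mp hj).2.le)
  exact mul_pos (mul_pos hchoose (pow_pos hp _)) (pow_pos hq _)

end Binomial

section PatriciaMu

variable {p : ℝ}

theorem patriciaMu_zero_left (p : ℝ) (k : ℕ) : patriciaMu p 0 k = 0 := by
  cases k <;> simp [patriciaMu]

theorem one_sub_pow_sub_one_sub_pow_mul_patriciaMu (hp : 0 < p) (hp1 : p < 1) (n k : ℕ) :
    (1 - p ^ (n + 2) - (1 - p) ^ (n + 2)) * patriciaMu p (n + 2) (k + 1) =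
      ∑ j ∈ Ioo 0 (n + 2), ((n + 2).choose j : ℝ) * p ^ j * (1 - p) ^ (n + 2 - j) *
        (patriciaMu p j k + patriciaMu p (n + 2 - j) k) := by
  rw [patriciaMu, mul_div_cancel₀ _ (one_sub_pow_sub_one_sub_pow_pos hp hp1 (by omega)).ne']

theorem patriciaMu_nonneg (hp : 0 < p) (hp1 : p < 1) (n k : ℕ) : 0 ≤ patriciaMu p n k := by
  induction k generalizing n with
  | zero => rcases n with _ | _ | n <;> simp [patriciaMu]
  | succ k ih =>
    rcases n with _ | _ | n
    · simp [patriciaMu]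
    · simp [patriciaMu]
    have hq : 0 ≤ 1 - p := by linarith
    refine nonneg_of_mul_nonneg_right ?_ (one_sub_pow_sub_one_sub_pow_pos hp hp1 (n := n + 2)
      (by omega))
    rw [one_sub_pow_sub_one_sub_pow_mul_patriciaMu hp hp1]
    exact sum_nonneg fun j _ => mul_nonneg (by positivity) (add_nonneg (ih j) (ih _))

theorem patriciaMu_le (hp : 0 < p) (hp1 : p < 1) (n k : ℕ) : patriciaMu p n k ≤ n := by
  induction k generalizing n with
  | zero =>
    rcases n with _ | _ | n <;> simp [patriciaMu]
    positivity
  | succ k ih =>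
    rcases n with _ | _ | n
    · simp [patriciaMu]
    · simp [patriciaMu]
    have hq : 0 ≤ 1 - p := by linarith
    have hD := one_sub_pow_sub_one_sub_pow_pos hp hp1 (n := n + 2) (by omega)
    refine le_of_mul_le_mul_left ?_ hD
    rw [one_sub_pow_sub_one_sub_pow_mul_patriciaMu hp hp1]
    calc ∑ j ∈ Ioo 0 (n + 2), ((n + 2).choose j : ℝ) * p ^ j * (1 - p) ^ (n + 2 - j) *
          (patriciaMu p j k + patriciaMu p (n + 2 - j) k)
        ≤ ∑ j ∈ Ioo 0 (n + 2), ((n + 2).choose j : ℝ) * p ^ j * (1 - p) ^ (n + 2 - j) *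
          ((n + 2 : ℕ) : ℝ) := by
          refine sum_le_sum fun j hj => mul_le_mul_of_nonneg_left ?_ (by positivity)
          have hjn : j ≤ n + 2 := (mem_Ioo.mp hj).2.le
          calc patriciaMu p j k + patriciaMu p (n + 2 - j) k
              ≤ (j : ℝ) + ((n + 2 - j : ℕ) : ℝ) := add_le_add (ih j) (ih _)
            _ = ((n + 2 : ℕ) : ℝ) := by rw [← Nat.cast_add, Nat.add_sub_cancel' hjn]
      _ = (1 - p ^ (n + 2) - (1 - p) ^ (n + 2)) * ((n + 2 : ℕ) : ℝ) := by
          rw [← sum_mul, sum_Ioo_choose_mul_pow p (1 - p) (by omega), add_sub_cancel, one_pow]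

theorem abs_patriciaMu_le_two_pow (hp : 0 < p) (hp1 : p < 1) (n k : ℕ) :
    |patriciaMu p n k| ≤ 2 ^ n := by
  rw [abs_of_nonneg (patriciaMu_nonneg hp hp1 n k)]
  exact (patriciaMu_le hp hp1 n k).trans (by exact_mod_cast n.lt_two_pow_self.le)

theorem patriciaMu_succ_eq (hp : 0 < p) (hp1 : p < 1) (n k : ℕ) :
    patriciaMu p n (k + 1) =
      ∑ j ∈ range (n + 1), (n.choose j : ℝ) * p ^ j * (1 - p) ^ (n - j) * patriciaMu p j k +
      ∑ j ∈ range (n + 1), (n.choose j : ℝ) * (1 - p) ^ j * p ^ (n - j) * patriciaMu p j k +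
      ((1 - p) ^ n + p ^ n) * (patriciaMu p n (k + 1) - patriciaMu p n k) := by
  match n with
  | 0 => simp [patriciaMu_zero_left]
  | 1 =>
    simp [sum_range_succ, patriciaMu_zero_left, patriciaMu]
    ring
  | n + 2 =>
    rw [← sum_range_choose_mul_pow_mul_reflect p (1 - p), ← sum_add_distrib]
    simp only [← mul_add]
    rw [sum_range_succ_eq_add_sum_Ioo_add _ (by omega),
      ← one_sub_pow_sub_one_sub_pow_mul_patriciaMu hp hp1]
    simp [patriciaMu_zero_left]
    ring

end PatriciaMu

noncomputable def egf (c : ℕ → ℝ) (x : ℝ) : ℝ :=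
  ∑' m, c m * x ^ m / m !

section Egf

variable {c : ℕ → ℝ}

theorem summable_norm_egf_of_abs_le {C R : ℝ} (hc : ∀ m, |c m| ≤ C * R ^ m) (x : ℝ) :
    Summable fun m => ‖c m * x ^ m / (m ! : ℝ)‖ := by
  refine .of_nonneg_of_le (fun _ => norm_nonneg _) (fun m => ?_)
    ((Real.summable_pow_div_factorial (R * |x|)).mul_left C)
  rw [Real.norm_eq_abs, abs_div, abs_mul, abs_pow, Nat.abs_cast, mul_pow]
  simp only [mul_div_assoc, ← mul_assoc]
  gcongr
  exact hc m

theorem hasSum_exp_mul_egf (a b z : ℝ)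
    (hc : Summable fun m => ‖c m * (b * z) ^ m / (m ! : ℝ)‖) :
    HasSum (fun n => (∑ j ∈ range (n + 1), (n.choose j : ℝ) * b ^ j * a ^ (n - j) * c j) *
      z ^ n / n !) (Real.exp (a * z) * egf c (b * z)) := by
  have hexp : HasSum (fun n => (a * z) ^ n / n !) (Real.exp (a * z)) := by
    rw [Real.exp_eq_exp_ℝ]
    exact NormedSpace.expSeries_div_hasSum_exp _
  rw [mul_comm, egf, ← hexp.tsum_eq]
  refine (hasSum_sum_range_mul_of_summable_norm hc
    (NormedSpace.norm_expSeries_div_summable _)).congr_fun fun n => ?_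
  rw [sum_mul, sum_div]
  refine sum_congr rfl fun j hj => ?_
  have hjn : j ≤ n := Nat.lt_succ_iff.mp (mem_range.mp hj)
  rw [Nat.cast_choose ℝ hjn, ← Nat.sub_add_cancel hjn, pow_add, Nat.add_sub_cancel]
  field_simp
  ring

theorem hasSum_egf_mul (b z : ℝ) (hc : Summable fun m => ‖c m * (b * z) ^ m / (m ! : ℝ)‖) :
    HasSum (fun n => b ^ n * c n * z ^ n / n !) (egf c (b * z)) :=
  hc.of_norm.hasSum.congr_fun fun n => by ring

end Egf

theorem egf_patriciaMu_succ {p : ℝ} (hp : 0 < p) (hp1 : p < 1) (k : ℕ) (z : ℝ) :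
    egf (patriciaMu p · (k + 1)) z =
      Real.exp ((1 - p) * z) * egf (patriciaMu p · k) (p * z) +
        Real.exp (p * z) * egf (patriciaMu p · k) ((1 - p) * z) +
        (egf (patriciaMu p · (k + 1)) ((1 - p) * z) - egf (patriciaMu p · k) ((1 - p) * z)) +
        (egf (patriciaMu p · (k + 1)) (p * z) - egf (patriciaMu p · k) (p * z)) := by
  have hμ (k : ℕ) (x : ℝ) : Summable fun m => ‖patriciaMu p m k * x ^ m / (m ! : ℝ)‖ :=
    summable_norm_egf_of_abs_le (C := 1) (R := 2)
      (fun m => by simpa using abs_patriciaMu_le_two_pow hp hp1 m k) x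
  have hconv := (hasSum_exp_mul_egf (1 - p) p z (hμ k _)).add
    (hasSum_exp_mul_egf p (1 - p) z (hμ k _))
  have hdiff (b : ℝ) := (hasSum_egf_mul b z (hμ (k + 1) _)).sub (hasSum_egf_mul b z (hμ k _))
  refine (hμ (k + 1) z).of_norm.hasSum.unique
    (((hconv.add (hdiff (1 - p))).add (hdiff p)).congr_fun fun n => ?_)
  linear_combination (z ^ n / n !) * patriciaMu_succ_eq hp hp1 n k

theorem poissonG_eq_exp_neg_mul_egf (p : ℝ) (k : ℕ) (z : ℝ) :
    poissonG p k z = Real.exp (-z) * egf (patriciaMu p · k) z := by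
  rw [poissonG, egf, ← tsum_mul_left]
  exact tsum_congr fun m => by ring

/-- The Poisson transform of the average PATRICIA profile satisfies, for `k ≥ 1`
and all real `z`, the functional equation
`G̃_k(z) = G̃_{k-1}(pz) + G̃_{k-1}(qz) + e^{-pz}(G̃_k - G̃_{k-1})(qz)
  + e^{-qz}(G̃_k - G̃_{k-1})(pz)`. -/
theorem poissonG_functional_equation (p : ℝ) (hp : 0 < p) (hp1 : p < 1)
    (q : ℝ) (hq : q = 1 - p) (k : ℕ) (hk : 1 ≤ k) (z : ℝ) :
    poissonG p k z =
      poissonG p (k - 1) (p * z) + poissonG p (k - 1) (q * z) +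
        Real.exp (-(p * z)) * (poissonG p k (q * z) - poissonG p (k - 1) (q * z)) +
        Real.exp (-(q * z)) * (poissonG p k (p * z) - poissonG p (k - 1) (p * z)) := by
  obtain ⟨k, rfl⟩ : ∃ k', k = k' + 1 := ⟨k - 1, by omega⟩
  subst hq
  have hp_exp : Real.exp (-z) * Real.exp ((1 - p) * z) = Real.exp (-(p * z)) := by
    rw [← Real.exp_add]; ring_nf
  have hq_exp : Real.exp (-z) * Real.exp (p * z) = Real.exp (-((1 - p) * z)) := by
    rw [← Real.exp_add]; ring_nf
  have hpq_exp : Real.exp (-(p * z)) * Real.exp (-((1 - p) * z)) = Real.exp (-z) := by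
    rw [← Real.exp_add]; ring_nf
  simp only [poissonG_eq_exp_neg_mul_egf, Nat.add_sub_cancel]
  rw [egf_patriciaMu_succ hp hp1 k z]
  linear_combination egf (patriciaMu p · k) (p * z) * hp_exp +
    egf (patriciaMu p · k) ((1 - p) * z) * hq_exp -
    (egf (patriciaMu p · (k + 1)) ((1 - p) * z) - egf (patriciaMu p · k) ((1 - p) * z) +
      egf (patriciaMu p · (k + 1)) (p * z) - egf (patriciaMu p · k) (p * z)) * hpq_exp
end
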